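/- arXiv:1810.00800 — 4 statements merged into one kernel-verified Lean document; each statement's English description precedes it below -/
import Mathlib

section
/- Let E denote the standard exponential distribution with cdf F(x) = 1 − e^{−x} on [0,∞). For every integer n ≥ 2: (i) the optimal anonymous pricing revenue satisfies Price(E,n) = sup_{x≥0} x·[1 − (1 − e^{−x})^n] = (H_n − 1)·sup_{c≥0} g_n(c); (ii) the optimal (Myerson) revenue satisfies Myer(E,n) ≥ H_n − 1; and consequently Myer(E,n)/Price(E,n) ≥ 1/(sup_{c≥0} g_n(c)). -/
/-!
Substituting `x = (H_n − 1)·c` turns the pricing revenue into `(H_n − 1)·g_n(c)`, which gives (i).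
For (ii), `Myer(E,n) = H_n − ∑_{k<n} a^{k+1}/(k+1)` with `a = 1 − e^{−1}`, by the fundamental theorem
of calculus, and the subtracted sum is a partial sum of `−log(1 − a) = 1`. Since `g_n ≥ 0`,
(i) and (ii) give the ratio bound; if `sup g_n` were `0`, both sides would be `0` as `x / 0 = 0`.
-/

open Real Set MeasureTheory

/-- `H n` is the `n`-th harmonic number `∑_{i=1}^n 1/i`. -/
noncomputable def H (n : ℕ) : ℝ := ∑ i ∈ Finset.range n, (1 : ℝ) / (i + 1)

/-- `g n c = c · [1 − (1 − e^{−c(H_n−1)})^n]`. -/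
noncomputable def g (n : ℕ) (c : ℝ) : ℝ :=
  c * (1 - (1 - Real.exp (-c * (H n - 1))) ^ n)

/-- The optimal anonymous pricing revenue for `n` bidders with i.i.d. standard exponential
valuations: `Price(E,n) = sup_{x ≥ 0} x·(1 − (1 − e^{−x})^n)`. -/
noncomputable def PriceExp (n : ℕ) : ℝ :=
  sSup ((fun x : ℝ => x * (1 - (1 - Real.exp (-x)) ^ n)) '' Set.Ici 0)

/-- The optimal (Myerson) revenue for `n` bidders with i.i.d. standard exponential
valuations (the monopoly reserve is `r* = 1`):
`Myer(E,n) = ∫_1^∞ (x − 1)·n·F(x)^{n−1}·f(x) dx` with `F(x) = 1 − e^{−x}`. -/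
noncomputable def MyerExp (n : ℕ) : ℝ :=
  ∫ x in Set.Ioi (1 : ℝ),
    (x - 1) * (n : ℝ) * (1 - Real.exp (-x)) ^ (n - 1) * Real.exp (-x)

open Filter Topology Finset Pointwise

lemma one_lt_H {n : ℕ} (hn : 2 ≤ n) : 1 < H n :=
  calc (1 : ℝ) < H 2 := by norm_num [H, sum_range_succ]
    _ ≤ H n := sum_le_sum_of_subset_of_nonneg (range_subset_range.mpr hn)
        fun _ _ _ => by positivity

lemma sSup_image_Ici_eq_mul_sSup_rescaled {f : ℝ → ℝ} {a : ℝ} (ha : 0 < a) :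
    sSup (f '' Ici 0) = a * sSup ((fun c => f (a * c) / a) '' Ici 0) := by
  have hrescale : f '' Ici 0 = a • ((fun c => f (a * c) / a) '' Ici 0) := by
    rw [← Set.image_smul, image_image]
    simp only [smul_eq_mul, mul_div_cancel₀ _ ha.ne']
    rw [← image_image f (a * ·), image_mul_left_Ici ha, mul_zero]
  rw [hrescale, Real.sSup_smul_of_nonneg ha.le, smul_eq_mul]

lemma priceExp_eq {n : ℕ} (hn : 2 ≤ n) : PriceExp n = (H n - 1) * sSup (g n '' Ici 0) := by
  have hH : 0 < H n - 1 := sub_pos.2 (one_lt_H hn)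
  rw [PriceExp, sSup_image_Ici_eq_mul_sSup_rescaled hH]
  congr 3
  funext c
  rw [g, neg_mul, mul_comm c]
  field_simp

lemma one_sub_one_sub_exp_neg_pow_nonneg (n : ℕ) {x : ℝ} (hx : 0 ≤ x) :
    0 ≤ 1 - (1 - exp (-x)) ^ n := by
  have hexp : exp (-x) ≤ 1 := exp_le_one_iff.mpr (neg_nonpos.mpr hx)
  exact sub_nonneg.mpr (pow_le_one₀ (sub_nonneg.mpr hexp) (sub_le_self _ (exp_pos _).le))

lemma g_nonneg {n : ℕ} (hH : 1 ≤ H n) {c : ℝ} (hc : 0 ≤ c) : 0 ≤ g n c := by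
  rw [g, neg_mul]
  exact mul_nonneg hc (one_sub_one_sub_exp_neg_pow_nonneg n (mul_nonneg hc (sub_nonneg.mpr hH)))

/-- An antiderivative of the Myerson integrand: integrate `(x − 1)·d(F^n − 1)` by parts and use
`1 − F^n = (∑_{k<n} F^k)·F'` for `F x = 1 − e^{−x}`. -/
noncomputable def myerAntideriv (n : ℕ) (x : ℝ) : ℝ :=
  (x - 1) * ((1 - exp (-x)) ^ n - 1) + ∑ k ∈ range n, (1 - exp (-x)) ^ (k + 1) / (k + 1)

lemma one_sub_one_sub_exp_neg_pow (n : ℕ) (x : ℝ) :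
    1 - (1 - exp (-x)) ^ n = (∑ k ∈ range n, (1 - exp (-x)) ^ k) * exp (-x) := by
  rw [← geom_sum_mul_neg, sub_sub_cancel]

lemma hasDerivAt_one_sub_exp_neg (x : ℝ) :
    HasDerivAt (fun y => 1 - exp (-y)) (exp (-x)) x := by
  simpa using ((hasDerivAt_neg x).exp).const_sub 1

lemma hasDerivAt_myerAntideriv (n : ℕ) (x : ℝ) :
    HasDerivAt (myerAntideriv n) ((x - 1) * n * (1 - exp (-x)) ^ (n - 1) * exp (-x)) x := by
  have hF := hasDerivAt_one_sub_exp_neg x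
  have hsum : HasDerivAt (fun y => ∑ k ∈ range n, (1 - exp (-y)) ^ (k + 1) / (k + 1))
      (∑ k ∈ range n, (1 - exp (-x)) ^ k * exp (-x)) x := by
    refine HasDerivAt.fun_sum fun k _ => ((hF.pow (k + 1)).div_const _).congr_deriv ?_
    push_cast
    field_simp
  refine ((((hasDerivAt_id x).sub_const 1).mul ((hF.pow n).sub_const 1)).add hsum).congr_deriv ?_
  rw [← Finset.sum_mul, ← one_sub_one_sub_exp_neg_pow]
  simp only [id, Pi.pow_apply]
  ring

lemma tendsto_myerAntideriv_atTop (n : ℕ) : Tendsto (myerAntideriv n) atTop (𝓝 (H n)) := by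
  have hexp : Tendsto (fun x : ℝ => exp (-x)) atTop (𝓝 0) := tendsto_exp_neg_atTop_nhds_zero
  have hF : Tendsto (fun x : ℝ => 1 - exp (-x)) atTop (𝓝 1) := by
    simpa using hexp.const_sub 1
  have hdecay : Tendsto (fun x : ℝ => (x - 1) * exp (-x)) atTop (𝓝 0) := by
    simpa [sub_mul] using
      (tendsto_pow_mul_exp_neg_atTop_nhds_zero 1).sub hexp
  have hgeom : Tendsto (fun x : ℝ => ∑ k ∈ range n, (1 - exp (-x)) ^ k) atTop
      (𝓝 (∑ k ∈ range n, (1 : ℝ) ^ k)) :=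
    tendsto_finsetSum _ fun k _ => hF.pow k
  have hboundary : Tendsto (fun x : ℝ => (x - 1) * ((1 - exp (-x)) ^ n - 1)) atTop (𝓝 0) := by
    have hprod := (hdecay.mul hgeom).neg
    simp only [zero_mul, neg_zero] at hprod
    exact hprod.congr fun x => by linear_combination (x - 1) * one_sub_one_sub_exp_neg_pow n x
  have hharmonic : Tendsto (fun x : ℝ => ∑ k ∈ range n, (1 - exp (-x)) ^ (k + 1) / (k + 1))
      atTop (𝓝 (H n)) := by
    rw [H]
    exact tendsto_finsetSum _ fun k _ => by simpa using (hF.pow (k + 1)).div_const ((k : ℝ) + 1)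
  have h := hboundary.add hharmonic
  rw [zero_add] at h
  exact h

lemma myerExp_eq (n : ℕ) : MyerExp n = H n - myerAntideriv n 1 := by
  refine integral_Ioi_of_hasDerivAt_of_nonneg
    (hasDerivAt_myerAntideriv n 1).continuousAt.continuousWithinAt
    (fun x _ => hasDerivAt_myerAntideriv n x) (fun x hx => ?_) (tendsto_myerAntideriv_atTop n)
  have hx : (0 : ℝ) ≤ x - 1 := sub_nonneg.mpr (le_of_lt hx)
  have hF : 0 ≤ 1 - exp (-x) := sub_nonneg.mpr (exp_le_one_iff.mpr (by linarith))
  positivity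

lemma sum_pow_succ_div_le_neg_log {a : ℝ} (h0 : 0 ≤ a) (h1 : a < 1) (n : ℕ) :
    ∑ k ∈ range n, a ^ (k + 1) / (k + 1) ≤ -log (1 - a) :=
  sum_le_hasSum (range n) (fun k _ => by positivity)
    (hasSum_pow_div_log_of_abs_lt_one (by rwa [abs_of_nonneg h0]))

lemma H_sub_one_le_myerExp (n : ℕ) : H n - 1 ≤ MyerExp n := by
  have hsum := sum_pow_succ_div_le_neg_log (a := 1 - exp (-1))
    (sub_nonneg.mpr (exp_le_one_iff.mpr (by norm_num))) (sub_lt_self _ (exp_pos _)) n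
  rw [sub_sub_cancel, log_exp, neg_neg] at hsum
  rw [myerExp_eq, myerAntideriv, sub_self, zero_mul, zero_add]
  linarith

lemma one_div_le_div_mul_of_le {a b s : ℝ} (ha : 0 < a) (hab : a ≤ b) (hs : 0 ≤ s) :
    1 / s ≤ b / (a * s) := by
  calc 1 / s = 1 * (1 / s) := (one_mul _).symm
    _ ≤ b / a * (1 / s) := by gcongr; exact (one_le_div ha).mpr hab
    _ = b / (a * s) := by rw [div_mul_div_comm, mul_one]

/-- For the standard exponential distribution and `n ≥ 2` bidders:
(i) `Price(E,n) = (H_n − 1)·sup_{c ≥ 0} g_n(c)`;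
(ii) `Myer(E,n) ≥ H_n − 1`;
and consequently `Myer(E,n)/Price(E,n) ≥ 1/(sup_{c ≥ 0} g_n(c))`. -/
theorem exponential_lower_bound (n : ℕ) (hn : 2 ≤ n) :
    PriceExp n = (H n - 1) * sSup (g n '' Set.Ici (0 : ℝ)) ∧
    H n - 1 ≤ MyerExp n ∧
    1 / sSup (g n '' Set.Ici (0 : ℝ)) ≤ MyerExp n / PriceExp n := by
  have hH : 0 < H n - 1 := sub_pos.2 (one_lt_H hn)
  have hS : 0 ≤ sSup (g n '' Ici 0) := Real.sSup_nonneg <| by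
    rintro _ ⟨c, hc, rfl⟩
    exact g_nonneg (one_lt_H hn).le hc
  refine ⟨priceExp_eq hn, H_sub_one_le_myerExp n, ?_⟩
  rw [priceExp_eq hn]
  exact one_div_le_div_mul_of_le hH (H_sub_one_le_myerExp n) hS
end

section
/- Let λ ∈ (0,1], r ∈ (0,1], and let F_{λ,r} be the rescaled Pareto distribution with cdf F_{λ,r}(x) = 1 − (1 + (x−1)/r)^{−1/λ} on [1,∞). Then for every integer n ≥ 2: (1) the expected second-highest of n i.i.d. draws from F_{λ,r} satisfies E[X_{n−1:n}] = 1 + r·(β_{n,λ} − 1); and (2) the optimal anonymous pricing revenue satisfies Price(F_{λ,r}, n) = sup_{q∈[0,1]} (1 + r·(q^{−λ} − 1))·(1 − (1−q)^n). -/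
open Real Set MeasureTheory

/-- `β_{n,λ} = n!·Γ(2−λ)/Γ(n+1−λ)`. -/
noncomputable def betaCoef (n : ℕ) (lam : ℝ) : ℝ :=
  (n.factorial : ℝ) * Real.Gamma (2 - lam) / Real.Gamma ((n : ℝ) + 1 - lam)

/-- Cdf of the rescaled Pareto distribution `F_{λ,r}(x) = 1 − (1 + (x−1)/r)^{−1/λ}`,
supported on `[1,∞)`. -/
noncomputable def Fpar (lam r x : ℝ) : ℝ := 1 - (1 + (x - 1) / r) ^ (-(1 : ℝ) / lam)

/-- Density of the rescaled Pareto distribution: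
`f_{λ,r}(x) = (1/(λr))·(1 + (x−1)/r)^{−1/λ−1}`. -/
noncomputable def fpar (lam r x : ℝ) : ℝ :=
  (1 / (lam * r)) * (1 + (x - 1) / r) ^ (-(1 : ℝ) / lam - 1)

/-- The expected `k`-th lowest order statistic of `n` i.i.d. draws from the distribution
with cdf `F` and density `f` supported on `D`. -/
noncomputable def EOrd (F f : ℝ → ℝ) (D : Set ℝ) (k n : ℕ) : ℝ :=
  (k : ℝ) * (n.choose k : ℝ) *
    ∫ x in D, x * F x ^ (k - 1) * (1 - F x) ^ (n - k) * f x

/-!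
Substitute `x = φ q` with `φ q = 1 + r (q^{-λ} - 1)`. It maps `(0, 1]` decreasingly
onto `[1, ∞)` with `F_{λ,r} (φ q) = 1 - q` and `|φ'(q)| f_{λ,r} (φ q) = 1`, so
`f_{λ,r} dx` becomes `dq`. The revenue curve `p (1 - F(p)^n)` becomes
`φ q (1 - (1 - q)^n)`, and since `φ q · q = (1 - r) q + r q^{1-λ}` the order-statistic
integral becomes the sum of Beta integrals `(1 - r) B(2, n - 1) + r B(2 - λ, n - 1)`.
-/

open scoped Nat

theorem integral_rpow_mul_one_sub_rpow {a b : ℝ} (ha : 0 < a) (hb : 0 < b) :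
    ∫ x in (0 : ℝ)..1, x ^ (a - 1) * (1 - x) ^ (b - 1) =
      Gamma a * Gamma b / Gamma (a + b) := by
  have hB : Complex.betaIntegral a b =
      ((∫ x in (0 : ℝ)..1, x ^ (a - 1) * (1 - x) ^ (b - 1) : ℝ) : ℂ) := by
    rw [Complex.betaIntegral, ← intervalIntegral.integral_ofReal]
    refine intervalIntegral.integral_congr fun x hx => ?_
    rw [uIcc_of_le zero_le_one] at hx
    push_cast [Complex.ofReal_cpow hx.1, Complex.ofReal_cpow (sub_nonneg.2 hx.2)]
    rfl
  have h := Complex.betaIntegral_eq_Gamma_mul_div a b (by simpa) (by simpa)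
  rw [hB, ← Complex.ofReal_add, Complex.Gamma_ofReal, Complex.Gamma_ofReal,
    Complex.Gamma_ofReal] at h
  exact_mod_cast h

theorem integral_Ioc_rpow_mul_one_sub_pow {a : ℝ} (ha : 0 < a) (m : ℕ) :
    ∫ x in Ioc (0 : ℝ) 1, x ^ (a - 1) * (1 - x) ^ m = Gamma a * m ! / Gamma (a + m + 1) := by
  have h := integral_rpow_mul_one_sub_rpow ha (Nat.cast_add_one_pos m)
  simp only [add_sub_cancel_right, rpow_natCast, Gamma_nat_eq_factorial, ← add_assoc] at h
  rwa [intervalIntegral.integral_of_le zero_le_one] at h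

theorem integrableOn_Ioc_rpow_mul_one_sub_pow {a : ℝ} (ha : 0 < a) (m : ℕ) :
    IntegrableOn (fun x : ℝ => x ^ (a - 1) * (1 - x) ^ m) (Ioc 0 1) := by
  have h : IntervalIntegrable (fun x : ℝ => x ^ (a - 1) * (1 - x) ^ m) volume 0 1 :=
    (intervalIntegral.intervalIntegrable_rpow' (by linarith)).mul_continuousOn (by fun_prop)
  exact (intervalIntegrable_iff_integrableOn_Ioc_of_le zero_le_one).1 h

theorem EOrd_succ_add_two (F f : ℝ → ℝ) (D : Set ℝ) (m : ℕ) :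
    EOrd F f D (m + 1) (m + 2) =
      (m + 1) * (m + 2) * ∫ x in D, x * F x ^ m * (1 - F x) * f x := by
  rw [EOrd, show (m + 2).choose (m + 1) = m + 2 by simp [Nat.choose_succ_self_right],
    add_tsub_cancel_right, show m + 2 - (m + 1) = 1 by omega]
  simp only [pow_one]
  push_cast
  ring

/-- The point at which the tail probability `1 - F_{λ,r}` equals `q`. -/
noncomputable def paretoQuantile (lam r q : ℝ) : ℝ := 1 + r * (q ^ (-lam) - 1)

section RescaledPareto

variable {lam r : ℝ}

theorem one_add_paretoQuantile_sub_one_div (hr : r ≠ 0) (q : ℝ) :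
    1 + (paretoQuantile lam r q - 1) / r = q ^ (-lam) := by
  rw [paretoQuantile]
  field_simp
  ring

theorem Fpar_paretoQuantile (hlam : lam ≠ 0) (hr : r ≠ 0) {q : ℝ} (hq : 0 ≤ q) :
    Fpar lam r (paretoQuantile lam r q) = 1 - q := by
  rw [Fpar, one_add_paretoQuantile_sub_one_div hr, ← rpow_mul hq,
    show -lam * (-1 / lam) = 1 by field_simp, rpow_one]

theorem fpar_paretoQuantile (hlam : lam ≠ 0) (hr : r ≠ 0) {q : ℝ} (hq : 0 ≤ q) :
    fpar lam r (paretoQuantile lam r q) = q ^ (lam + 1) / (lam * r) := by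
  rw [fpar, one_add_paretoQuantile_sub_one_div hr, ← rpow_mul hq,
    show -lam * (-1 / lam - 1) = lam + 1 by field_simp; ring, one_div_mul_eq_div]

theorem hasDerivAt_paretoQuantile {q : ℝ} (hq : q ≠ 0) :
    HasDerivAt (paretoQuantile lam r) (-(r * lam * q ^ (-lam - 1))) q := by
  have h := (((hasDerivAt_rpow_const (p := -lam) (Or.inl hq)).sub_const 1).const_mul r).const_add 1
  exact h.congr_deriv (by ring)

theorem strictAntiOn_paretoQuantile (hlam : 0 < lam) (hr : 0 < r) :
    StrictAntiOn (paretoQuantile lam r) (Ioi 0) := fun a ha b _ hab => by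
  have := rpow_lt_rpow_of_neg ha hab (neg_lt_zero.2 hlam)
  simp only [paretoQuantile]
  nlinarith

theorem paretoQuantile_image_Ioc (hlam : 0 < lam) (hr : 0 < r) :
    paretoQuantile lam r '' Ioc 0 1 = Ici 1 := by
  refine Subset.antisymm ?_ fun p (hp : 1 ≤ p) => ?_
  · rintro _ ⟨q, hq, rfl⟩
    have := one_le_rpow_of_pos_of_le_one_of_nonpos hq.1 hq.2 (neg_nonpos.2 hlam.le)
    simp only [paretoQuantile, mem_Ici]
    nlinarith
  · have ht : 1 ≤ 1 + (p - 1) / r := le_add_of_nonneg_right (div_nonneg (by linarith) hr.le)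
    refine ⟨(1 + (p - 1) / r) ^ (-1 / lam),
      ⟨by positivity, rpow_le_one_of_one_le_of_nonpos ht (by
        rw [neg_div]; exact neg_nonpos.2 (by positivity))⟩, ?_⟩
    rw [paretoQuantile, ← rpow_mul (by linarith), show -1 / lam * -lam = 1 by field_simp,
      rpow_one]
    field_simp
    ring

theorem setIntegral_Ici_mul_fpar (hlam : 0 < lam) (hr : 0 < r) (g : ℝ → ℝ) :
    ∫ x in Ici 1, g x * fpar lam r x = ∫ q in Ioc 0 1, g (paretoQuantile lam r q) := by
  rw [← paretoQuantile_image_Ioc hlam hr,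
    integral_image_eq_integral_abs_deriv_smul measurableSet_Ioc
      (fun q hq => (hasDerivAt_paretoQuantile hq.1.ne').hasDerivWithinAt)
      ((strictAntiOn_paretoQuantile hlam hr).injOn.mono Ioc_subset_Ioi_self)]
  refine setIntegral_congr_fun measurableSet_Ioc fun q hq => ?_
  have hpow : q ^ (-lam - 1) * q ^ (lam + 1) = 1 := by
    rw [← rpow_add hq.1, show -lam - 1 + (lam + 1) = 0 by ring, rpow_zero]
  rw [smul_eq_mul, abs_neg, abs_of_pos (by have := hq.1; positivity),
    fpar_paretoQuantile hlam.ne' hr.ne' hq.1.le]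
  field_simp
  linear_combination g (paretoQuantile lam r q) * hpow

theorem image_Ici_eq_image_paretoQuantile (hlam : 0 < lam) (hr : 0 < r) (g : ℝ → ℝ → ℝ) :
    (fun p => g p (Fpar lam r p)) '' Ici 1 =
      (fun q => g (paretoQuantile lam r q) (1 - q)) '' Ioc 0 1 := by
  rw [← paretoQuantile_image_Ioc hlam hr, image_image]
  exact image_congr fun q hq => by rw [Fpar_paretoQuantile hlam.ne' hr.ne' hq.1.le]

theorem setIntegral_Ici_mul_Fpar_pow_mul_one_sub_Fpar_mul_fpar (hlam : 0 < lam) (hlam2 : lam < 2)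
    (hr : 0 < r) (m : ℕ) :
    ∫ x in Ici 1, x * Fpar lam r x ^ m * (1 - Fpar lam r x) * fpar lam r x =
      (1 - r) * (Gamma 2 * m ! / Gamma (2 + m + 1)) +
        r * (Gamma (2 - lam) * m ! / Gamma (2 - lam + m + 1)) := by
  have hpt : ∀ q ∈ Ioc (0 : ℝ) 1,
      paretoQuantile lam r q * Fpar lam r (paretoQuantile lam r q) ^ m *
        (1 - Fpar lam r (paretoQuantile lam r q)) =
        (1 - r) * (q ^ ((2 : ℝ) - 1) * (1 - q) ^ m) + r * (q ^ (2 - lam - 1) * (1 - q) ^ m) := by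
    intro q hq
    have hpow : q ^ (-lam) * q = q ^ (2 - lam - 1) := by
      rw [show 2 - lam - 1 = -lam + 1 by ring, rpow_add_one hq.1.ne']
    rw [Fpar_paretoQuantile hlam.ne' hr.ne' hq.1.le, paretoQuantile, sub_sub_cancel,
      show (2 : ℝ) - 1 = 1 by norm_num, rpow_one]
    linear_combination r * (1 - q) ^ m * hpow
  rw [setIntegral_Ici_mul_fpar hlam hr (fun x => x * Fpar lam r x ^ m * (1 - Fpar lam r x)),
    setIntegral_congr_fun measurableSet_Ioc hpt,
    integral_add ((integrableOn_Ioc_rpow_mul_one_sub_pow two_pos m).const_mul _)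
      ((integrableOn_Ioc_rpow_mul_one_sub_pow (sub_pos.2 hlam2) m).const_mul _),
    integral_const_mul, integral_const_mul, integral_Ioc_rpow_mul_one_sub_pow two_pos,
    integral_Ioc_rpow_mul_one_sub_pow (sub_pos.2 hlam2)]

theorem EOrd_Fpar_succ_add_two (hlam : 0 < lam) (hlam2 : lam < 2) (hr : 0 < r) (m : ℕ) :
    EOrd (Fpar lam r) (fpar lam r) (Ici 1) (m + 1) (m + 2) =
      1 + r * (betaCoef (m + 2) lam - 1) := by
  rw [EOrd_succ_add_two, setIntegral_Ici_mul_Fpar_pow_mul_one_sub_Fpar_mul_fpar hlam hlam2 hr,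
    betaCoef, Gamma_two, show (2 : ℝ) + m + 1 = (m + 2 : ℕ) + 1 by push_cast; ring,
    Gamma_nat_eq_factorial,
    show (2 - lam + m + 1) = ((m + 2 : ℕ) : ℝ) + 1 - lam by push_cast; ring,
    Nat.factorial_succ, Nat.factorial_succ]
  have : Gamma (((m + 2 : ℕ) : ℝ) + 1 - lam) ≠ 0 :=
    (Gamma_pos_of_pos (by push_cast; linarith)).ne'
  field_simp
  push_cast
  ring

end RescaledPareto

/-- For `λ ∈ (0,1]`, `r ∈ (0,1]` and the rescaled Pareto distribution `F_{λ,r}` on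
`[1,∞)`, for every `n ≥ 2`:
(1) the expected second-highest of `n` i.i.d. draws is `1 + r·(β_{n,λ} − 1)`;
(2) the optimal anonymous pricing revenue equals
`sup_{q∈(0,1]} (1 + r·(q^{−λ} − 1))·(1 − (1−q)^n)` (the sup over the quantile space,
which equals the sup over `q ∈ [0,1]` with the removable singularity at `q = 0`). -/
theorem rescaled_pareto_basic (lam r : ℝ) (hlam : lam ∈ Set.Ioc (0 : ℝ) 1)
    (hr : r ∈ Set.Ioc (0 : ℝ) 1) (n : ℕ) (hn : 2 ≤ n) :
    EOrd (Fpar lam r) (fpar lam r) (Set.Ici 1) (n - 1) n =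
      1 + r * (betaCoef n lam - 1) ∧
    sSup ((fun p => p * (1 - Fpar lam r p ^ n)) '' Set.Ici 1) =
      sSup ((fun q => (1 + r * (q ^ (-lam) - 1)) * (1 - (1 - q) ^ n)) ''
        Set.Ioc (0 : ℝ) 1) := by
  obtain ⟨m, rfl⟩ : ∃ m, n = m + 2 := ⟨n - 2, by omega⟩
  exact ⟨EOrd_Fpar_succ_add_two hlam.1 (by linarith [hlam.2]) hr.1 m,
    congrArg sSup <|
      image_Ici_eq_image_paretoQuantile hlam.1 hr.1 fun p F => p * (1 - F ^ (m + 2))⟩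
end

section
/- Let λ ∈ (0,1), r ∈ (0,1], n ≥ 2, and let F_{λ,r} be the rescaled Pareto distribution with cdf F_{λ,r}(x) = 1 − (1 + (x−1)/r)^{−1/λ} on [1,∞), with monopoly reserve r*. Then the optimal (Myerson) revenue for n i.i.d. bidders satisfies Myer(F_{λ,r},n) ≥ 1 + r·(β_{n,λ} − 1), and consequently Myer(F_{λ,r},n)/Price(F_{λ,r},n) ≥ (1 + r·(β_{n,λ} − 1)) / (sup_{q∈[0,1]} H_{n,λ}(r,q)). -/
/-! In quantile coordinates `q = 1 - F_{λ,r}(x)` the value is `x(q) = 1 + r(q^{-λ} - 1)`, the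
density satisfies `f(x(q)) |x'(q)| = 1`, and the virtual value is `1 - r + r(1-λ)q^{-λ}`.
For `λ < 1` and `r ≤ 1` the revenue `x(1 - F(x))` is `< 1 = 1·(1 - F(1))` for `x > 1`, so the
monopoly reserve is `1`, and substituting `x = x(q)` turns Myerson's integral into
`∫₀¹ (1 - r + r(1-λ)q^{-λ}) n (1-q)^{n-1} dq = 1 + r(β_{n,λ} - 1)` by the Beta integral.
The same substitution identifies the pricing revenues `p(1 - F(p)^n)`, `p ≥ 1`, with the values
`H_{n,λ}(r,q)`, `q ∈ (0,1]`, so both suprema are the same number. -/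

open Real Set MeasureTheory

/-- `H_{n,λ}(r,q) = (1 + r·(q^{−λ} − 1))·(1 − (1−q)^n)`. -/
noncomputable def Hnl (n : ℕ) (lam r q : ℝ) : ℝ :=
  (1 + r * (q ^ (-lam) - 1)) * (1 - (1 - q) ^ n)

/-- Optimal (Myerson) revenue for `n` bidders:
`Myer(F,n) = ∫_{r*}^∞ (x − (1−F(x))/f(x))·n·F(x)^{n−1}·f(x) dx`. -/
noncomputable def Myer (F f : ℝ → ℝ) (rstar : ℝ) (n : ℕ) : ℝ :=
  ∫ x in Set.Ioi rstar, (x - (1 - F x) / f x) * (n : ℝ) * F x ^ (n - 1) * f x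

open scoped Nat

lemma integral_rpow_mul_one_sub_pow {a : ℝ} (ha : 0 < a) (m : ℕ) :
    ∫ u in (0 : ℝ)..1, u ^ (a - 1) * (1 - u) ^ m =
      Real.Gamma a * m ! / Real.Gamma (a + m + 1) := by
  have hbeta := Complex.betaIntegral_eq_Gamma_mul_div (a : ℂ) (m + 1)
    (by simpa using ha) (by norm_cast; omega)
  rw [Complex.Gamma_nat_eq_factorial, Complex.betaIntegral,
    show (a : ℂ) + (m + 1) = ((a + m + 1 : ℝ) : ℂ) by push_cast; ring,
    Complex.Gamma_ofReal, Complex.Gamma_ofReal] at hbeta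
  have hcast : ((∫ u in (0 : ℝ)..1, u ^ (a - 1) * (1 - u) ^ m : ℝ) : ℂ) =
      ∫ u in (0 : ℝ)..1,
        (u : ℂ) ^ ((a : ℂ) - 1) * (1 - (u : ℂ)) ^ ((m : ℂ) + 1 - 1) := by
    rw [← intervalIntegral.integral_ofReal]
    refine intervalIntegral.integral_congr fun u hu => ?_
    rw [uIcc_of_le zero_le_one] at hu
    push_cast
    rw [Complex.ofReal_cpow hu.1, add_sub_cancel_right, Complex.cpow_natCast]
    push_cast; rfl
  exact_mod_cast hcast.trans hbeta

lemma integral_one_sub_pow (m : ℕ) : ∫ u in (0 : ℝ)..1, (1 - u) ^ m = 1 / (m + 1) := by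
  simp [intervalIntegral.integral_comp_sub_left (fun u => u ^ m) 1]

lemma betaCoef_succ {lam : ℝ} (hlam : lam < 1) (m : ℕ) :
    betaCoef (m + 1) lam =
      (1 - lam) * (m + 1) * ∫ u in (0 : ℝ)..1, u ^ (-lam) * (1 - u) ^ m := by
  have h := integral_rpow_mul_one_sub_pow (sub_pos.2 hlam) m
  rw [sub_sub_cancel_left] at h
  rw [h, betaCoef, Nat.factorial_succ, show (2 : ℝ) - lam = 1 - lam + 1 by ring,
    Real.Gamma_add_one (sub_pos.2 hlam).ne',
    show 1 - lam + m + 1 = ((m + 1 : ℕ) : ℝ) + 1 - lam by push_cast; ring]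
  push_cast
  ring

noncomputable def paretoValue (lam r q : ℝ) : ℝ := 1 + r * (q ^ (-lam) - 1)

section ParetoQuantile

variable {lam r : ℝ}

lemma one_sub_Fpar (x : ℝ) : 1 - Fpar lam r x = (1 + (x - 1) / r) ^ (-(1 : ℝ) / lam) :=
  sub_sub_cancel _ _

lemma one_add_paretoValue_sub_one_div (hr : r ≠ 0) (q : ℝ) :
    1 + (paretoValue lam r q - 1) / r = q ^ (-lam) := by
  rw [paretoValue]
  field_simp
  ring

lemma Fpar_paretoValue (hlam : lam ≠ 0) (hr : r ≠ 0) {q : ℝ} (hq : 0 ≤ q) :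
    Fpar lam r (paretoValue lam r q) = 1 - q := by
  rw [Fpar, one_add_paretoValue_sub_one_div hr, ← rpow_mul hq,
    show -lam * (-1 / lam) = 1 by field_simp, rpow_one]

lemma fpar_paretoValue (hlam : lam ≠ 0) (hr : r ≠ 0) {q : ℝ} (hq : 0 ≤ q) :
    fpar lam r (paretoValue lam r q) = q ^ (lam + 1) / (lam * r) := by
  rw [fpar, one_add_paretoValue_sub_one_div hr, ← rpow_mul hq,
    show -lam * (-1 / lam - 1) = lam + 1 by field_simp; ring]
  ring

lemma one_le_one_add_sub_one_div (hr : 0 < r) {x : ℝ} (hx : 1 ≤ x) : 1 ≤ 1 + (x - 1) / r :=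
  le_add_of_nonneg_right (div_nonneg (sub_nonneg.2 hx) hr.le)

lemma one_sub_Fpar_pos (hr : 0 < r) {x : ℝ} (hx : 1 ≤ x) : 0 < 1 - Fpar lam r x := by
  rw [one_sub_Fpar]
  exact rpow_pos_of_pos (one_pos.trans_le (one_le_one_add_sub_one_div hr hx)) _

lemma paretoValue_one_sub_Fpar (hlam : lam ≠ 0) (hr : 0 < r) {x : ℝ} (hx : 1 ≤ x) :
    paretoValue lam r (1 - Fpar lam r x) = x := by
  rw [paretoValue, one_sub_Fpar,
    ← rpow_mul (zero_le_one.trans (one_le_one_add_sub_one_div hr hx)),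
    show -1 / lam * -lam = 1 by field_simp, rpow_one]
  field_simp
  ring

lemma paretoValue_one : paretoValue lam r 1 = 1 := by
  simp [paretoValue]

lemma hasDerivAt_paretoValue {q : ℝ} (hq : 0 < q) :
    HasDerivAt (paretoValue lam r) (r * (-lam * q ^ (-lam - 1))) q :=
  (((hasDerivAt_rpow_const (Or.inl hq.ne')).sub_const 1).const_mul r).const_add 1

lemma strictAntiOn_paretoValue (hlam : 0 < lam) (hr : 0 < r) :
    StrictAntiOn (paretoValue lam r) (Ioi 0) := fun a ha b _ hab => by
  have := rpow_lt_rpow_of_neg ha hab (neg_lt_zero.2 hlam)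
  simp only [paretoValue]
  gcongr

lemma image_paretoValue_Ioc (hlam : 0 < lam) (hr : 0 < r) :
    paretoValue lam r '' Ioc 0 1 = Ici 1 := by
  have hanti := strictAntiOn_paretoValue hlam hr
  have hone : (1 : ℝ) ∈ Ioi 0 := mem_Ioi.2 one_pos
  ext x
  constructor
  · rintro ⟨q, hq, rfl⟩
    rw [mem_Ici, ← paretoValue_one (lam := lam) (r := r)]
    exact (hanti.le_iff_ge hone hq.1).2 hq.2
  · intro (hx : 1 ≤ x)
    have hq := paretoValue_one_sub_Fpar hlam.ne' hr hx
    refine ⟨1 - Fpar lam r x, ⟨one_sub_Fpar_pos hr hx, ?_⟩, hq⟩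
    rwa [← hanti.le_iff_ge hone (one_sub_Fpar_pos hr hx), hq, paretoValue_one]

lemma image_paretoValue_Ioo (hlam : 0 < lam) (hr : 0 < r) :
    paretoValue lam r '' Ioo 0 1 = Ioi 1 := by
  have hanti := strictAntiOn_paretoValue hlam hr
  have hone : (1 : ℝ) ∈ Ioi 0 := mem_Ioi.2 one_pos
  ext x
  constructor
  · rintro ⟨q, hq, rfl⟩
    rw [mem_Ioi, ← paretoValue_one (lam := lam) (r := r)]
    exact (hanti.lt_iff_gt hone hq.1).2 hq.2
  · intro (hx : 1 < x)
    have hq := paretoValue_one_sub_Fpar hlam.ne' hr hx.le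
    refine ⟨1 - Fpar lam r x, ⟨one_sub_Fpar_pos hr hx.le, ?_⟩, hq⟩
    rwa [← hanti.lt_iff_gt hone (one_sub_Fpar_pos hr hx.le), hq, paretoValue_one]

lemma virtualValue_paretoValue (hlam : lam ≠ 0) (hr : r ≠ 0) {q : ℝ} (hq : 0 < q) :
    paretoValue lam r q - (1 - Fpar lam r (paretoValue lam r q)) / fpar lam r (paretoValue lam r q)
      = 1 - r + r * (1 - lam) * q ^ (-lam) := by
  rw [Fpar_paretoValue hlam hr hq.le, fpar_paretoValue hlam hr hq.le, sub_sub_cancel, paretoValue,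
    rpow_add hq, rpow_one, rpow_neg hq.le]
  have := (rpow_pos_of_pos hq lam).ne'
  field_simp
  ring

lemma abs_deriv_paretoValue_mul_fpar (hlam : 0 < lam) (hr : 0 < r) {q : ℝ} (hq : 0 < q) :
    |r * (-lam * q ^ (-lam - 1))| * fpar lam r (paretoValue lam r q) = 1 := by
  rw [fpar_paretoValue hlam.ne' hr.ne' hq.le, abs_of_nonpos (by
    have := rpow_pos_of_pos hq (-lam - 1); nlinarith [mul_pos hr hlam]),
    rpow_sub hq, rpow_neg hq.le, rpow_add hq, rpow_one]
  have := (rpow_pos_of_pos hq lam).ne'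
  field_simp

lemma Myer_Fpar_one_eq_integral (hlam : 0 < lam) (hr : 0 < r) (n : ℕ) :
    Myer (Fpar lam r) (fpar lam r) 1 n =
      ∫ u in (0 : ℝ)..1, (1 - r + r * (1 - lam) * u ^ (-lam)) * n * (1 - u) ^ (n - 1) := by
  rw [Myer, ← image_paretoValue_Ioo hlam hr,
    integral_image_eq_integral_abs_deriv_smul measurableSet_Ioo
      (fun u hu => (hasDerivAt_paretoValue hu.1).hasDerivWithinAt)
      ((strictAntiOn_paretoValue hlam hr).injOn.mono Ioo_subset_Ioi_self),
    intervalIntegral.integral_of_le zero_le_one, integral_Ioc_eq_integral_Ioo]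
  refine setIntegral_congr_fun measurableSet_Ioo fun u hu => ?_
  have hjac := abs_deriv_paretoValue_mul_fpar hlam hr hu.1
  rw [smul_eq_mul, virtualValue_paretoValue hlam.ne' hr.ne' hu.1,
    Fpar_paretoValue hlam.ne' hr.ne' hu.1.le]
  linear_combination ((1 - r + r * (1 - lam) * u ^ (-lam)) * n * (1 - u) ^ (n - 1)) * hjac

lemma Myer_Fpar_one (hlam : lam ∈ Ioo 0 1) (hr : 0 < r) {n : ℕ} (hn : n ≠ 0) :
    Myer (Fpar lam r) (fpar lam r) 1 n = 1 + r * (betaCoef n lam - 1) := by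
  obtain ⟨m, rfl⟩ := Nat.exists_eq_succ_of_ne_zero hn
  have hpow : IntervalIntegrable (fun u : ℝ => (1 - u) ^ m) volume 0 1 :=
    (continuous_const.sub continuous_id).pow m |>.intervalIntegrable 0 1
  have hbeta : IntervalIntegrable (fun u : ℝ => u ^ (-lam) * (1 - u) ^ m) volume 0 1 :=
    (intervalIntegral.intervalIntegrable_rpow' (by linarith [hlam.2])).mul_continuousOn
      ((continuous_const.sub continuous_id).pow m).continuousOn
  rw [Myer_Fpar_one_eq_integral hlam.1 hr, betaCoef_succ hlam.2, Nat.succ_sub_one]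
  have hsplit : (fun u : ℝ => (1 - r + r * (1 - lam) * u ^ (-lam)) * ↑(m + 1) * (1 - u) ^ m) =
      fun u => (1 - r) * (m + 1) * (1 - u) ^ m +
        r * (1 - lam) * (m + 1) * (u ^ (-lam) * (1 - u) ^ m) := by
    ext u
    push_cast
    ring
  rw [hsplit, intervalIntegral.integral_add (hpow.const_mul _) (hbeta.const_mul _),
    intervalIntegral.integral_const_mul, intervalIntegral.integral_const_mul, integral_one_sub_pow]
  field_simp
  ring

lemma mul_one_sub_Fpar_lt_one (hlam : lam ∈ Ioo 0 1) (hr : r ∈ Ioc 0 1) {x : ℝ} (hx : 1 < x) :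
    x * (1 - Fpar lam r x) < 1 := by
  set b := 1 + (x - 1) / r
  have hxb : x ≤ b := by
    have : x - 1 ≤ (x - 1) / r := le_div_self (by linarith) hr.1 hr.2
    linarith
  have hexp : -1 / lam + 1 < 0 := by
    have : 1 < 1 / lam := by rw [lt_div_iff₀ hlam.1]; linarith [hlam.2]
    rw [neg_div]
    linarith
  calc x * (1 - Fpar lam r x) = x * b ^ (-1 / lam) := by rw [one_sub_Fpar]
    _ ≤ b * b ^ (-1 / lam) := by gcongr; exact rpow_nonneg (by linarith) _
    _ = b ^ (-1 / lam + 1) := by rw [rpow_add_one (by linarith), mul_comm]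
    _ < 1 := rpow_lt_one_of_one_lt_of_neg (by linarith) hexp

lemma eq_one_of_isMaxOn_mul_one_sub_Fpar (hlam : lam ∈ Ioo 0 1) (hr : r ∈ Ioc 0 1) {x₀ : ℝ}
    (hx₀ : 1 ≤ x₀) (hmax : IsMaxOn (fun x => x * (1 - Fpar lam r x)) (Ici 1) x₀) :
    x₀ = 1 := by
  by_contra hne
  have h1 : 1 ≤ x₀ * (1 - Fpar lam r x₀) := by
    simpa [Fpar] using isMaxOn_iff.1 hmax 1 self_mem_Ici
  exact (mul_one_sub_Fpar_lt_one hlam hr (hx₀.lt_of_ne' hne)).not_ge h1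

lemma image_pricingRevenue_Ici (hlam : 0 < lam) (hr : 0 < r) (n : ℕ) :
    (fun p => p * (1 - Fpar lam r p ^ n)) '' Ici 1 = Hnl n lam r '' Ioc 0 1 := by
  rw [← image_paretoValue_Ioc hlam hr, image_image]
  exact image_congr fun q hq => by rw [Fpar_paretoValue hlam.ne' hr.ne' hq.1.le]; rfl

end ParetoQuantile

/-- For `λ ∈ (0,1)`, `r ∈ (0,1]`, `n ≥ 2`, and the rescaled Pareto distribution `F_{λ,r}`
with monopoly reserve `r*`: `Myer(F_{λ,r},n) ≥ 1 + r·(β_{n,λ} − 1)`, and consequently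
`Myer(F_{λ,r},n)/Price(F_{λ,r},n) ≥ (1 + r·(β_{n,λ} − 1))/(sup_{q∈[0,1]} H_{n,λ}(r,q))`
(the sup taken over `q ∈ (0,1]`, which agrees with the continuous extension to `q = 0`). -/
theorem rescaled_pareto_lower_bound (lam r : ℝ) (hlam : lam ∈ Set.Ioo (0 : ℝ) 1)
    (hr : r ∈ Set.Ioc (0 : ℝ) 1) (n : ℕ) (hn : 2 ≤ n) (rstar : ℝ)
    (hrstar : rstar ∈ Set.Ici (1 : ℝ))
    (hmax : IsMaxOn (fun x => x * (1 - Fpar lam r x)) (Set.Ici 1) rstar) :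
    1 + r * (betaCoef n lam - 1) ≤ Myer (Fpar lam r) (fpar lam r) rstar n ∧
    (1 + r * (betaCoef n lam - 1)) / sSup (Hnl n lam r '' Set.Ioc (0 : ℝ) 1) ≤
      Myer (Fpar lam r) (fpar lam r) rstar n /
        sSup ((fun p => p * (1 - Fpar lam r p ^ n)) '' Set.Ici 1) := by
  obtain rfl := eq_one_of_isMaxOn_mul_one_sub_Fpar hlam hr hrstar hmax
  rw [Myer_Fpar_one hlam hr.1 (by omega), image_pricingRevenue_Ici hlam.1 hr.1]
  exact ⟨le_rfl, le_rfl⟩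
end

section
/- For every integer n ≥ 5, the point c̃_n = (ln n − ln ln n)/(H_n − 1) lies in [0,1] and satisfies g_n(c̃_n) ≥ ((ln n − ln ln n)/ln n)·(1 − 1/n). Consequently, max_{c∈[0,1]} g_n(c) = 1 − O(ln ln n / ln n) as n → ∞. -/
open Real Set Filter Asymptotics

lemma log_le_half_sub_inv {x : ℝ} (hx : 1 ≤ x) : Real.log x ≤ (x - x⁻¹) / 2 := by
  have hx0 : 0 < x := lt_of_lt_of_le one_pos hx
  have h1 : Real.log x ≤ Real.sinh (Real.log x) :=
    Real.self_le_sinh_iff.mpr (Real.log_nonneg hx)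
  rwa [Real.sinh_log hx0] at h1

lemma H_lower : ∀ n : ℕ, 1 ≤ n → Real.log n + 1/2 + 1/(2*n) ≤ H n := by
  intro n hn
  induction n with
  | zero => omega
  | succ m ih =>
    rcases Nat.eq_or_lt_of_le hn with h | h
    · have : m = 0 := by omega
      subst this
      simp [H, Finset.sum_range_one]
      norm_num
    · have hm : 1 ≤ m := by omega
      have IH := ih hm
      have hH : H (m+1) = H m + 1/(m+1+0) := by
        simp [H, Finset.sum_range_succ]
      have hm0 : (0:ℝ) < m := by exact_mod_cast hm
      have hm1 : (0:ℝ) < (m:ℝ) + 1 := by linarith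
      have key : Real.log ((m+1:ℝ)) - Real.log m ≤ 1/(2*m) + 1/(2*(m+1)) := by
        have h2 : Real.log ((m+1:ℝ)/m) ≤ (((m+1:ℝ)/m) - ((m+1:ℝ)/m)⁻¹)/2 := by
          apply log_le_half_sub_inv
          rw [le_div_iff₀ hm0]; linarith
        rw [Real.log_div (by positivity) (ne_of_gt hm0)] at h2
        have : (((m+1:ℝ)/m) - ((m+1:ℝ)/m)⁻¹)/2 = 1/(2*m) + 1/(2*(m+1)) := by
          rw [inv_div]
          field_simp
          ring
        linarith [this ▸ h2]
      have hcast : ((m+1:ℕ):ℝ) = (m:ℝ)+1 := by push_cast; ring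
      rw [hH, hcast]
      have harith : 1/((m:ℝ)+1+0) = 1/((m:ℝ)+1) := by norm_num
      rw [harith]
      have heq : 1/((m:ℝ)+1) - 1/(2*((m:ℝ)+1)) = 1/(2*((m:ℝ)+1)) := by
        field_simp; ring
      linarith

lemma log5_lb : (8:ℝ)/5 ≤ Real.log 5 := by
  rw [Real.le_log_iff_exp_le (by norm_num)]
  have h1 : Real.exp (8/5) ^ (5:ℕ) = Real.exp 1 ^ (8:ℕ) := by
    rw [← Real.exp_nat_mul, ← Real.exp_nat_mul]; norm_num
  have h2 : Real.exp 1 ^ (8:ℕ) ≤ (2.7182818286:ℝ) ^ (8:ℕ) :=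
    pow_le_pow_left₀ (Real.exp_pos 1).le Real.exp_one_lt_d9.le 8
  have h3 : (2.7182818286:ℝ) ^ (8:ℕ) ≤ 5 ^ (5:ℕ) := by norm_num
  exact le_of_pow_le_pow_left₀ (n:=5) (by norm_num) (by norm_num) (by rw [h1]; linarith)

lemma log5_ub : Real.log 5 ≤ 13/8 := by
  rw [Real.log_le_iff_le_exp (by norm_num)]
  have h1 : Real.exp (13/8) ^ (8:ℕ) = Real.exp 1 ^ (13:ℕ) := by
    rw [← Real.exp_nat_mul, ← Real.exp_nat_mul]; norm_num
  have h2 : (2.7182818283:ℝ) ^ (13:ℕ) ≤ Real.exp 1 ^ (13:ℕ) :=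
    pow_le_pow_left₀ (by norm_num) Real.exp_one_gt_d9.le 13
  have h3 : (5:ℝ) ^ (8:ℕ) ≤ (2.7182818283:ℝ) ^ (13:ℕ) := by norm_num
  exact le_of_pow_le_pow_left₀ (n:=8) (by norm_num) (Real.exp_pos _).le (by rw [h1]; linarith)

lemma loglog5_lb : (41:ℝ)/120 ≤ Real.log (Real.log 5) := by
  have h1 : Real.log (8/5 : ℝ) ≤ Real.log (Real.log 5) :=
    Real.log_le_log (by norm_num) log5_lb
  have h2 : Real.log (8/5 : ℝ) = 3 * Real.log 2 - Real.log 5 := by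
    rw [show (8:ℝ)/5 = 2^(3:ℕ)/5 by norm_num, Real.log_div (by norm_num) (by norm_num),
      Real.log_pow]
    norm_num
  have := Real.log_two_gt_d9
  have := log5_ub
  linarith

lemma log6_lb : (7:ℝ)/4 ≤ Real.log 6 := by
  rw [Real.le_log_iff_exp_le (by norm_num)]
  have h1 : Real.exp (7/4) ^ (4:ℕ) = Real.exp 1 ^ (7:ℕ) := by
    rw [← Real.exp_nat_mul, ← Real.exp_nat_mul]; norm_num
  have h2 : Real.exp 1 ^ (7:ℕ) ≤ (2.7182818286:ℝ) ^ (7:ℕ) :=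
    pow_le_pow_left₀ (Real.exp_pos 1).le Real.exp_one_lt_d9.le 7
  have h3 : (2.7182818286:ℝ) ^ (7:ℕ) ≤ 6 ^ (4:ℕ) := by norm_num
  exact le_of_pow_le_pow_left₀ (n:=4) (by norm_num) (by norm_num) (by rw [h1]; linarith)

lemma exp_half_ub : Real.exp (1/2) ≤ 7/4 := by
  have h1 : Real.exp (1/2) ^ (2:ℕ) = Real.exp 1 ^ (1:ℕ) := by
    rw [← Real.exp_nat_mul, ← Real.exp_nat_mul]; norm_num
  have h2 : Real.exp 1 ^ (1:ℕ) ≤ (2.7182818286:ℝ) ^ (1:ℕ) :=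
    pow_le_pow_left₀ (Real.exp_pos 1).le Real.exp_one_lt_d9.le 1
  exact le_of_pow_le_pow_left₀ (n:=2) (by norm_num) (by norm_num)
    (by rw [h1]; nlinarith)

lemma H_eq_harmonic (n : ℕ) : H n = (harmonic n : ℝ) := by
  unfold H harmonic
  push_cast
  simp [one_div]

lemma H_ub (n : ℕ) : H n ≤ 1 + Real.log n := by
  rw [H_eq_harmonic]; exact harmonic_le_one_add_log n

lemma part1 (n : ℕ) (hn : 5 ≤ n) :
    (Real.log n - Real.log (Real.log n)) / (H n - 1) ∈ Set.Icc (0 : ℝ) 1 ∧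
    ((Real.log n - Real.log (Real.log n)) / Real.log n) * (1 - 1 / n) ≤
      g n ((Real.log n - Real.log (Real.log n)) / (H n - 1)) := by
  have hn5 : (5:ℝ) ≤ (n:ℝ) := by exact_mod_cast hn
  have hnpos : (0:ℝ) < n := by linarith
  have hlog5 : Real.log 5 ≤ Real.log n := Real.log_le_log (by norm_num) hn5
  have hlogpos : (0:ℝ) < Real.log n := by
    have := log5_lb; linarith
  have hlogself : Real.log n ≤ (n:ℝ) := Real.log_le_self hnpos.le
  have hloglog : Real.log (Real.log n) ≤ Real.log n :=
    le_trans (Real.log_le_self hlogpos.le) le_rfl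
  have hnum : 0 ≤ Real.log n - Real.log (Real.log n) := by linarith
  have hHlow := H_lower n (by omega)
  have hden : 0 < H n - 1 := by
    have : (0:ℝ) < 1/(2*(n:ℝ)) := by positivity
    have := log5_lb
    linarith
  -- upper bound: log n - log log n ≤ H n - 1
  have hupper : Real.log n - Real.log (Real.log n) ≤ H n - 1 := by
    rcases Nat.eq_or_lt_of_le hn with h | h
    · -- n = 5
      subst h
      have hH5 : H 5 = 137/60 := by
        simp [H, Finset.sum_range_succ]
        norm_num
      have := log5_ub
      have h5 : Real.log ((5:ℕ):ℝ) = Real.log 5 := by norm_num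
      rw [hH5, h5]
      have := loglog5_lb
      linarith
    · -- n ≥ 6 : log log n ≥ 1/2
      have h6 : (6:ℝ) ≤ (n:ℝ) := by exact_mod_cast h
      have hlog6 : Real.log 6 ≤ Real.log n := Real.log_le_log (by norm_num) h6
      have hexp : Real.exp (1/2) ≤ Real.log n := by
        have := log6_lb; have := exp_half_ub; linarith
      have hll : (1:ℝ)/2 ≤ Real.log (Real.log n) := by
        rw [Real.le_log_iff_exp_le hlogpos]; exact hexp
      have hpos2 : (0:ℝ) ≤ 1/(2*(n:ℝ)) := by positivity
      linarith
  have hmem : (Real.log n - Real.log (Real.log n)) / (H n - 1) ∈ Set.Icc (0:ℝ) 1 := by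
    constructor
    · positivity
    · rw [div_le_one hden]; exact hupper
  refine ⟨hmem, ?_⟩
  -- now the g bound
  set c := (Real.log n - Real.log (Real.log n)) / (H n - 1) with hc
  have hcmul : c * (H n - 1) = Real.log n - Real.log (Real.log n) :=
    div_mul_cancel₀ _ (ne_of_gt hden)
  have hexp_eq : Real.exp (-c * (H n - 1)) = Real.log n / n := by
    rw [neg_mul, hcmul, neg_sub, Real.exp_sub, Real.exp_log hlogpos, Real.exp_log hnpos]
  rw [g, hexp_eq]
  set t := Real.log n / n with ht
  have ht0 : 0 ≤ t := by positivity
  have ht1 : t ≤ 1 := by rw [ht, div_le_one hnpos]; exact hlogself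
  have hpow : (1 - t) ^ n ≤ 1 / n := by
    have h1 : (1 - t) ≤ Real.exp (-t) := by
      have := Real.add_one_le_exp (-t); linarith
    have h2 : (1 - t) ^ n ≤ Real.exp (-t) ^ n :=
      pow_le_pow_left₀ (by linarith) h1 n
    have h3 : Real.exp (-t) ^ n = Real.exp ((n:ℝ) * (-t)) := (Real.exp_nat_mul _ n).symm
    have h4 : (n:ℝ) * (-t) = -Real.log n := by
      rw [ht]; field_simp
    rw [h3, h4, Real.exp_neg, Real.exp_log hnpos] at h2
    rw [one_div]; exact h2
  have hfac : 1 - 1/(n:ℝ) ≤ 1 - (1 - t) ^ n := by linarith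
  have hfac0 : (0:ℝ) ≤ 1 - 1/(n:ℝ) := by
    rw [sub_nonneg, div_le_one hnpos]; linarith
  have hc_ge : (Real.log n - Real.log (Real.log n)) / Real.log n ≤ c := by
    rw [hc]
    apply div_le_div_of_nonneg_left hnum hden
    have := H_ub n; linarith
  have hc0 : 0 ≤ c := hmem.1
  calc (Real.log n - Real.log (Real.log n)) / Real.log n * (1 - 1/(n:ℝ))
      ≤ c * (1 - (1 - t) ^ n) := mul_le_mul hc_ge hfac hfac0 hc0

lemma g_le_one (n : ℕ) (hn : 1 ≤ n) {c : ℝ} (hc : c ∈ Set.Icc (0:ℝ) 1) : g n c ≤ 1 := by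
  obtain ⟨hc0, hc1⟩ := hc
  have hH1 : 1 ≤ H n := by
    have h0 : (0:ℕ) ∈ Finset.range n := Finset.mem_range.mpr (by omega)
    have := Finset.single_le_sum (f := fun i : ℕ => (1:ℝ)/(i+1))
      (fun i _ => by positivity) h0
    simpa [H] using this
  have hz0 : 0 ≤ 1 - Real.exp (-c * (H n - 1)) := by
    have : Real.exp (-c * (H n - 1)) ≤ 1 := by
      rw [Real.exp_le_one_iff]
      have : 0 ≤ c * (H n - 1) := mul_nonneg hc0 (by linarith)
      linarith
    linarith
  have hzn : 0 ≤ (1 - Real.exp (-c * (H n - 1))) ^ n := pow_nonneg hz0 n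
  calc g n c ≤ c * 1 := by
        rw [g]; exact mul_le_mul_of_nonneg_left (by linarith) hc0
    _ ≤ 1 := by linarith

lemma part2 :
    (fun n : ℕ => 1 - sSup (g n '' Set.Icc (0 : ℝ) 1)) =O[atTop]
      (fun n : ℕ => Real.log (Real.log n) / Real.log n) := by
  rw [isBigO_iff]
  refine ⟨2, ?_⟩
  filter_upwards [eventually_ge_atTop 16] with n hn
  have hn5 : 5 ≤ n := by omega
  have hn16 : (16:ℝ) ≤ (n:ℝ) := by exact_mod_cast hn
  have hnpos : (0:ℝ) < n := by linarith
  have hlogpos : (0:ℝ) < Real.log n := Real.log_pos (by linarith)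
  have hlog16 : Real.log 16 ≤ Real.log n := Real.log_le_log (by norm_num) hn16
  have hlog16' : Real.log (16:ℝ) = 4 * Real.log 2 := by
    rw [show (16:ℝ) = 2^(4:ℕ) by norm_num, Real.log_pow]; norm_num
  have hexp1 : Real.exp 1 ≤ Real.log n := by
    have h1 := Real.exp_one_lt_d9
    have h2 := Real.log_two_gt_d9
    rw [hlog16'] at hlog16
    linarith
  have hll1 : (1:ℝ) ≤ Real.log (Real.log n) := by
    rw [Real.le_log_iff_exp_le hlogpos]
    simpa using hexp1
  set L := Real.log (Real.log n) / Real.log n with hL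
  have hL0 : 0 ≤ L := by positivity
  have hL1 : L ≤ 1 := by
    rw [hL, div_le_one hlogpos]
    exact Real.log_le_self hlogpos.le
  have h1n : 1/(n:ℝ) ≤ L := by
    have h1 : 1/(n:ℝ) ≤ 1/Real.log n := by
      apply div_le_div_of_nonneg_left (by norm_num) hlogpos (Real.log_le_self hnpos.le)
    have h2 : 1/Real.log n ≤ L := by
      rw [hL]
      exact (div_le_div_iff_of_pos_right hlogpos).mpr hll1
    linarith
  obtain ⟨hmem, hg⟩ := part1 n hn5
  set S := sSup (g n '' Set.Icc (0:ℝ) 1) with hS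
  have hbdd : ∀ y ∈ g n '' Set.Icc (0:ℝ) 1, y ≤ 1 := by
    rintro y ⟨c, hc, rfl⟩
    exact g_le_one n (by omega) hc
  have hSle : S ≤ 1 := csSup_le ⟨g n 0, Set.mem_image_of_mem _ (by norm_num)⟩ hbdd
  have hSge : g n ((Real.log n - Real.log (Real.log n)) / (H n - 1)) ≤ S :=
    le_csSup ⟨1, fun y hy => hbdd y hy⟩ (Set.mem_image_of_mem _ hmem)
  have ha : (Real.log n - Real.log (Real.log n)) / Real.log n = 1 - L := by
    rw [hL, sub_div, div_self (ne_of_gt hlogpos)]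
  rw [ha] at hg
  have hkey : (1 - L) * (1 - 1/(n:ℝ)) ≤ S := le_trans hg hSge
  have hLn : 0 ≤ L / n := by positivity
  have hfinal : 1 - S ≤ 2 * L := by nlinarith
  rw [Real.norm_eq_abs, Real.norm_eq_abs, abs_of_nonneg hL0]
  rw [abs_le]
  constructor
  · linarith
  · linarith

/-- For every integer `n ≥ 5`, the point `c̃_n = (ln n − ln ln n)/(H_n − 1)` lies in `[0,1]`
and `g_n(c̃_n) ≥ ((ln n − ln ln n)/ln n)·(1 − 1/n)`.  Consequently,
`max_{c ∈ [0,1]} g_n(c) = 1 − O(ln ln n / ln n)` as `n → ∞`. -/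
theorem g_max_asymptotics :
    (∀ n : ℕ, 5 ≤ n →
      (Real.log n - Real.log (Real.log n)) / (H n - 1) ∈ Set.Icc (0 : ℝ) 1 ∧
      ((Real.log n - Real.log (Real.log n)) / Real.log n) * (1 - 1 / n) ≤
        g n ((Real.log n - Real.log (Real.log n)) / (H n - 1))) ∧
    (fun n : ℕ => 1 - sSup (g n '' Set.Icc (0 : ℝ) 1)) =O[atTop]
      (fun n : ℕ => Real.log (Real.log n) / Real.log n) := by
  exact ⟨part1, part2⟩
end
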